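/- Let G be a discrete group and F ⊆ G a finite subset. For x in the group von Neumann algebra L(G) with Fourier coefficients x̂(γ) = τ(x λ_γ*), the compressed operator P_F x P_F ∈ B(ℓ²F) has matrix entries (P_F x P_F)_{s,t} = x̂(st⁻¹) for s, t ∈ F, and ‖P_F x P_F‖_{S_p(ℓ²F)} ≤ |F|^{1/p} ‖x‖_{L^p(L(G), τ)} for p ∈ {1, 2, ∞} (and hence, by interpolation, for all 1 ≤ p ≤ ∞). -/

import Mathlib

open scoped BigOperators ComplexConjugate ENNReal

section CompressionAux

lemma summable_mul_of_sq {ι : Type*} {A B : ι → ℝ} (hA : ∀ i, 0 ≤ A i) (hB : ∀ i, 0 ≤ B i)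
    (hA2 : Summable fun i => A i ^ 2) (hB2 : Summable fun i => B i ^ 2) :
    Summable fun i => A i * B i := by
  refine Summable.of_nonneg_of_le (fun i => mul_nonneg (hA i) (hB i))
    (fun i => ?_) ((hA2.add hB2).div_const 2)
  have := sq_nonneg (A i - B i)
  nlinarith

/-- Cauchy–Schwarz inequality for `tsum`s of nonnegative reals. -/
lemma tsum_mul_le_sqrt_mul_sqrt' {ι : Type*} (A B : ι → ℝ) (hA : ∀ i, 0 ≤ A i)
    (hB : ∀ i, 0 ≤ B i) (hA2 : Summable fun i => A i ^ 2) (hB2 : Summable fun i => B i ^ 2) :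
    ∑' i, A i * B i ≤ Real.sqrt (∑' i, A i ^ 2) * Real.sqrt (∑' i, B i ^ 2) := by
  refine Summable.tsum_le_of_sum_le (summable_mul_of_sq hA hB hA2 hB2) fun s => ?_
  refine (Real.sum_mul_le_sqrt_mul_sqrt s A B).trans ?_
  have h1 : ∑ i ∈ s, A i ^ 2 ≤ ∑' i, A i ^ 2 :=
    Summable.sum_le_tsum s (fun i _ => sq_nonneg _) hA2
  have h2 : ∑ i ∈ s, B i ^ 2 ≤ ∑' i, B i ^ 2 :=
    Summable.sum_le_tsum s (fun i _ => sq_nonneg _) hB2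
  exact mul_le_mul (Real.sqrt_le_sqrt h1) (Real.sqrt_le_sqrt h2) (Real.sqrt_nonneg _)
    (Real.sqrt_nonneg _)

lemma summable_norm_mul_norm' {ι : Type*} {a b : ι → ℂ}
    (ha : Summable fun t => ‖a t‖ ^ 2) (hb : Summable fun t => ‖b t‖ ^ 2) :
    Summable fun t => ‖a t‖ * ‖b t‖ :=
  summable_mul_of_sq (fun _ => norm_nonneg _) (fun _ => norm_nonneg _) ha hb

lemma summable_mul_conj' {ι : Type*} {a b : ι → ℂ}
    (ha : Summable fun t => ‖a t‖ ^ 2) (hb : Summable fun t => ‖b t‖ ^ 2) :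
    Summable fun t => a t * conj (b t) := by
  refine Summable.of_norm ?_
  simpa [norm_mul] using summable_norm_mul_norm' ha hb

/-- Multiplying a vector by a unitary matrix preserves the sum of squared norms. -/
lemma unitary_vecMul_normSq' {n : Type*} [Fintype n] [DecidableEq n]
    (U : Matrix n n ℂ) (hU : U ∈ Matrix.unitaryGroup n ℂ) (a : n → ℂ) :
    ∑ s, ‖∑ t, a t * U t s‖ ^ 2 = ∑ t, ‖a t‖ ^ 2 := by
  have hU1 : U * star U = 1 := (Matrix.mem_unitaryGroup_iff.mp hU)
  have key : ((∑ s, ‖∑ t, a t * U t s‖ ^ 2 : ℝ) : ℂ) = ((∑ t, ‖a t‖ ^ 2 : ℝ) : ℂ) := by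
    push_cast
    have h1 : ∀ z : ℂ, (‖z‖ : ℂ) ^ 2 = z * conj z := by
      intro z; rw [Complex.mul_conj]; norm_cast
      rw [← Complex.sq_norm]
    calc (∑ s, (‖∑ t, a t * U t s‖ : ℂ) ^ 2)
        = ∑ s, (∑ t, a t * U t s) * conj (∑ r, a r * U r s) := by
          refine Finset.sum_congr rfl fun s _ => h1 _
      _ = ∑ s, ∑ t, ∑ r, a t * U t s * (conj (a r) * conj (U r s)) := by
          refine Finset.sum_congr rfl fun s _ => ?_
          rw [map_sum, Finset.sum_mul_sum]
          simp [map_mul]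
      _ = ∑ t, ∑ r, a t * conj (a r) * ∑ s, U t s * conj (U r s) := by
          rw [Finset.sum_comm]
          refine Finset.sum_congr rfl fun t _ => ?_
          rw [Finset.sum_comm]
          refine Finset.sum_congr rfl fun r _ => ?_
          rw [Finset.mul_sum]
          refine Finset.sum_congr rfl fun s _ => by ring
      _ = ∑ t, ∑ r, a t * conj (a r) * (1 : Matrix n n ℂ) t r := by
          refine Finset.sum_congr rfl fun t _ => Finset.sum_congr rfl fun r _ => ?_
          congr 1
          rw [← hU1]
          simp [Matrix.mul_apply, Matrix.star_apply]
      _ = ∑ t, a t * conj (a t) := by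
          refine Finset.sum_congr rfl fun t _ => ?_
          rw [Finset.sum_eq_single t]
          · simp
          · intro r _ hr; simp [Matrix.one_apply, (Ne.symm hr)]
          · intro h; simp at h
      _ = ∑ t, (‖a t‖ : ℂ) ^ 2 := by
          refine Finset.sum_congr rfl fun t _ => (h1 _).symm
  exact_mod_cast key

end CompressionAux

/-- Let `G` be a discrete group and `F ⊆ G` finite.  Let
`T ∈ L(G) ⊆ B(ℓ²G)`, i.e. a bounded operator commuting with right translations,
with Fourier coefficients `x̂(γ) = (T δ_e)(γ)`.  Then the compression `P_F T P_F`
has matrix entries `x̂(st⁻¹)` (`s, t ∈ F`), and its Schatten norms satisfy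
`‖P_F T P_F‖_{S_p} ≤ |F|^{1/p} ‖T‖_{L^p}` for `p = 2` (Frobenius bound against
`‖T‖₂² = ∑ |x̂|²`), `p = ∞` (operator-norm bound), and `p = 1` (trace-norm bound,
via the unitary characterization, against the `A(G)`-representation
`x̂(γ) = ⟨λ_γ ξ, η⟩` of the `L¹` norm). -/
theorem compression_schatten_bounds
    {G : Type*} [Group G] [DecidableEq G] (F : Finset G)
    (T : lp (fun _ : G => ℂ) 2 →L[ℂ] lp (fun _ : G => ℂ) 2)
    (hT : ∀ (g : G) (v w : lp (fun _ : G => ℂ) 2),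
      (∀ u, w u = v (u * g)) → ∀ t, (T w) t = (T v) (t * g))
    (xhat : G → ℂ) (hxhat : ∀ γ, xhat γ = (T (lp.single 2 (1 : G) 1)) γ) :
    -- matrix entries of the compression
    (∀ s t : G, (T (lp.single 2 t 1)) s = xhat (s * t⁻¹)) ∧
    -- p = 2
    (∑ s ∈ F, ∑ t ∈ F, ‖xhat (s * t⁻¹)‖ ^ 2 ≤ F.card * ∑' γ, ‖xhat γ‖ ^ 2) ∧
    -- p = ∞
    (∀ v : F → ℂ,
      Real.sqrt (∑ s, ‖(Matrix.mulVec (Matrix.of fun s t : F => xhat ((s : G) * (t : G)⁻¹)) v) s‖ ^ 2)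
        ≤ ‖T‖ * Real.sqrt (∑ t, ‖v t‖ ^ 2)) ∧
    -- p = 1
    (∀ ξ η : G → ℂ, (Summable fun t => ‖ξ t‖ ^ 2) → (Summable fun t => ‖η t‖ ^ 2) →
      (∀ γ, xhat γ = ∑' t, ξ (γ⁻¹ * t) * conj (η t)) →
      ∀ U ∈ Matrix.unitaryGroup F ℂ,
        ‖((Matrix.of fun s t : F => xhat ((s : G) * (t : G)⁻¹)) * (U : Matrix F F ℂ)).trace‖ ≤
          F.card * (Real.sqrt (∑' t, ‖ξ t‖ ^ 2) * Real.sqrt (∑' t, ‖η t‖ ^ 2))) := by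
  have h2 : (0 : ℝ) < (2 : ℝ≥0∞).toReal := by norm_num
  have htr : (2:ℝ≥0∞).toReal = ((2:ℕ):ℝ) := by norm_num
  have hpow : ∀ x : ℝ, x ^ ((2:ℝ≥0∞).toReal) = x ^ 2 := fun x => by
    rw [htr, Real.rpow_natCast]
  -- Part 1: matrix entries
  have entries : ∀ s t : G, (T (lp.single 2 t 1)) s = xhat (s * t⁻¹) := by
    intro s t
    have h := hT t⁻¹ (lp.single 2 (1 : G) 1) (lp.single 2 t 1) ?_ s
    · rw [h, hxhat]
    · intro u
      rw [lp.single_apply, lp.single_apply]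
      by_cases h : u = t
      · subst h; simp
      · rw [Pi.single_apply, Pi.single_apply, if_neg h, if_neg]
        exact fun hc => h (mul_inv_eq_one.mp hc)
  -- Part 2: Frobenius bound
  have hsum : Summable fun γ => ‖xhat γ‖ ^ 2 := by
    have := (lp.memℓp (T (lp.single 2 (1 : G) 1))).summable h2
    have heq : (fun γ => ‖xhat γ‖ ^ 2) =
        fun γ => ‖(T (lp.single 2 (1 : G) 1)) γ‖ ^ ((2 : ℝ≥0∞).toReal) := by
      funext γ
      rw [hxhat γ, hpow]
    rw [heq]
    exact this
  have part2 : ∑ s ∈ F, ∑ t ∈ F, ‖xhat (s * t⁻¹)‖ ^ 2 ≤ F.card * ∑' γ, ‖xhat γ‖ ^ 2 := by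
    rw [Finset.sum_comm]
    calc ∑ t ∈ F, ∑ s ∈ F, ‖xhat (s * t⁻¹)‖ ^ 2
        ≤ ∑ t ∈ F, ∑' γ, ‖xhat γ‖ ^ 2 := by
          refine Finset.sum_le_sum fun t _ => ?_
          have hinj : Set.InjOn (fun s => s * t⁻¹) F := fun a _ b _ h => by
            simpa using mul_right_cancel h
          rw [show (∑ s ∈ F, ‖xhat (s * t⁻¹)‖ ^ 2)
              = ∑ γ ∈ F.image (fun s => s * t⁻¹), ‖xhat γ‖ ^ 2 from
            (Finset.sum_image (f := fun γ => ‖xhat γ‖ ^ 2)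
              (fun a ha b hb h => hinj ha hb h)).symm]
          exact Summable.sum_le_tsum _ (fun _ _ => sq_nonneg _) hsum
      _ = F.card * ∑' γ, ‖xhat γ‖ ^ 2 := by
          rw [Finset.sum_const, nsmul_eq_mul]
  -- Part 3: operator-norm bound
  have part3 : ∀ v : F → ℂ,
      Real.sqrt (∑ s, ‖(Matrix.mulVec (Matrix.of fun s t : F => xhat ((s : G) * (t : G)⁻¹)) v) s‖ ^ 2)
        ≤ ‖T‖ * Real.sqrt (∑ t, ‖v t‖ ^ 2) := by
    intro v
    set w : lp (fun _ : G => ℂ) 2 := ∑ t : F, v t • lp.single 2 (t : G) (1 : ℂ) with hw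
    have hwcoord : ∀ u : G, w u = if h : u ∈ F then v ⟨u, h⟩ else 0 := by
      intro u
      rw [hw, lp.coeFn_sum, Finset.sum_apply]
      simp only [lp.coeFn_smul, Pi.smul_apply, lp.single_apply, smul_eq_mul]
      by_cases h : u ∈ F
      · rw [dif_pos h, Finset.sum_eq_single (⟨u, h⟩ : F)]
        · simp
        · intro t _ ht
          rw [Pi.single_apply, if_neg, mul_zero]
          exact fun hc => ht (Subtype.ext hc.symm)
        · simp
      · rw [dif_neg h, Finset.sum_eq_zero]
        intro t _
        rw [Pi.single_apply, if_neg, mul_zero]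
        exact fun hc => h (hc ▸ t.2)
    have hTw : ∀ s : G, (T w) s = ∑ t : F, xhat (s * (t : G)⁻¹) * v t := by
      intro s
      rw [hw, map_sum]
      rw [lp.coeFn_sum, Finset.sum_apply]
      refine Finset.sum_congr rfl fun t _ => ?_
      rw [map_smul, lp.coeFn_smul, Pi.smul_apply, smul_eq_mul, entries s t, mul_comm]
    have hmv : ∀ s : F, (Matrix.mulVec (Matrix.of fun s t : F => xhat ((s : G) * (t : G)⁻¹)) v) s
        = (T w) (s : G) := by
      intro s
      rw [hTw]
      rfl
    have hwnorm : ‖w‖ ^ ((2:ℝ≥0∞).toReal) = ∑ t : F, ‖v t‖ ^ 2 := by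
      rw [lp.norm_rpow_eq_tsum h2]
      have : (fun u => ‖w u‖ ^ (2 : ℝ≥0∞).toReal) = fun u => ‖w u‖ ^ (2:ℕ) := by
        funext u; rw [hpow]
      rw [this, tsum_eq_sum (s := F) (fun u hu => by rw [hwcoord u, dif_neg hu]; simp)]
      rw [← Finset.sum_coe_sort F]
      refine Finset.sum_congr rfl fun u _ => ?_
      rw [hwcoord u, dif_pos u.2]
    set S := ∑ t : F, ‖v t‖ ^ 2 with hS
    have hwval : ‖w‖ = Real.sqrt S := by
      rw [← hwnorm, hpow]
      exact (Real.sqrt_sq (norm_nonneg _)).symm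
    have hsumTw : Summable fun u => ‖(T w) u‖ ^ 2 := by
      have := (lp.memℓp (T w)).summable h2
      simpa [hpow] using this
    have h1 : ∑ s : F,
        ‖(Matrix.mulVec (Matrix.of fun s t : F => xhat ((s : G) * (t : G)⁻¹)) v) s‖ ^ 2
        ≤ (‖T‖ * Real.sqrt S) ^ 2 := by
      calc ∑ s : F, ‖(Matrix.mulVec (Matrix.of fun s t : F => xhat ((s : G) * (t : G)⁻¹)) v) s‖ ^ 2
          = ∑ s ∈ F, ‖(T w) s‖ ^ 2 := by
            rw [← Finset.sum_coe_sort F (fun s => ‖(T w) s‖ ^ 2)]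
            exact Finset.sum_congr rfl fun s _ => by rw [hmv]
        _ ≤ ∑' u, ‖(T w) u‖ ^ 2 := Summable.sum_le_tsum _ (fun _ _ => sq_nonneg _) hsumTw
        _ = ‖T w‖ ^ 2 := by
            rw [← hpow, lp.norm_rpow_eq_tsum h2]
            simp [hpow]
        _ ≤ (‖T‖ * ‖w‖) ^ 2 := pow_le_pow_left₀ (norm_nonneg _) (T.le_opNorm w) 2
        _ = (‖T‖ * Real.sqrt S) ^ 2 := by rw [hwval]
    have := Real.sqrt_le_sqrt h1
    rwa [Real.sqrt_sq (mul_nonneg (norm_nonneg _) (Real.sqrt_nonneg _))] at this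
  -- Part 4: trace-norm bound
  refine ⟨entries, part2, part3, ?_⟩
  intro ξ η hξ hη hrep U hU
  have hξt : ∀ g : G, Summable fun u => ‖ξ (g * u)‖ ^ 2 := fun g =>
    ((Equiv.mulLeft g).summable_iff (f := fun r => ‖ξ r‖ ^ 2)).mpr hξ
  have hηt : ∀ g : G, Summable fun u => ‖η (g * u)‖ ^ 2 := fun g =>
    ((Equiv.mulLeft g).summable_iff (f := fun r => ‖η r‖ ^ 2)).mpr hη
  have hcoef : ∀ s t : G, xhat (s * t⁻¹) = ∑' u, ξ (t * u) * conj (η (s * u)) := by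
    intro s t
    rw [hrep (s * t⁻¹)]
    rw [← (Equiv.mulLeft s).tsum_eq (fun r => ξ ((s * t⁻¹)⁻¹ * r) * conj (η r))]
    refine tsum_congr fun u => ?_
    simp only [Equiv.coe_mulLeft]
    congr 2
    group
  set c : G → ℂ := fun u => ∑ s : F, ∑ t : F, ξ ((t : G) * u) * conj (η ((s : G) * u)) * U t s
    with hc
  have hsum1 : ∀ (s t : F), Summable fun u : G =>
      ξ ((t : G) * u) * conj (η ((s : G) * u)) * U t s :=
    fun s t => (summable_mul_conj' (hξt t) (hηt s)).mul_right _
  have htrace : ((Matrix.of fun s t : F => xhat ((s : G) * (t : G)⁻¹)) * (U : Matrix F F ℂ)).trace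
      = ∑' u, c u := by
    rw [Matrix.trace]
    simp only [Matrix.diag_apply, Matrix.mul_apply, Matrix.of_apply]
    calc ∑ s : F, ∑ t : F, xhat ((s : G) * (t : G)⁻¹) * U t s
        = ∑ s : F, ∑ t : F, ∑' u, ξ ((t : G) * u) * conj (η ((s : G) * u)) * U t s := by
          refine Finset.sum_congr rfl fun s _ => Finset.sum_congr rfl fun t _ => ?_
          rw [hcoef s t, tsum_mul_right]
      _ = ∑ s : F, ∑' u, ∑ t : F, ξ ((t : G) * u) * conj (η ((s : G) * u)) * U t s := by
          refine Finset.sum_congr rfl fun s _ => ?_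
          exact (Summable.tsum_finsetSum fun t _ => hsum1 s t).symm
      _ = ∑' u, c u := (Summable.tsum_finsetSum fun s _ => summable_sum (fun t _ => hsum1 s t)).symm
  set A : G → ℝ := fun u => Real.sqrt (∑ t : F, ‖ξ ((t : G) * u)‖ ^ 2) with hA
  set B : G → ℝ := fun u => Real.sqrt (∑ s : F, ‖η ((s : G) * u)‖ ^ 2) with hB
  have hAnn : ∀ u, 0 ≤ A u := fun u => Real.sqrt_nonneg _
  have hBnn : ∀ u, 0 ≤ B u := fun u => Real.sqrt_nonneg _
  have hA2 : ∀ u, A u ^ 2 = ∑ t : F, ‖ξ ((t : G) * u)‖ ^ 2 := fun u =>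
    Real.sq_sqrt (Finset.sum_nonneg fun _ _ => sq_nonneg _)
  have hB2 : ∀ u, B u ^ 2 = ∑ s : F, ‖η ((s : G) * u)‖ ^ 2 := fun u =>
    Real.sq_sqrt (Finset.sum_nonneg fun _ _ => sq_nonneg _)
  have hA2sum : Summable fun u => A u ^ 2 := by
    simp only [hA2]
    exact summable_sum fun t _ => hξt t
  have hB2sum : Summable fun u => B u ^ 2 := by
    simp only [hB2]
    exact summable_sum fun s _ => hηt s
  have hAB : Summable fun u => A u * B u := summable_mul_of_sq hAnn hBnn hA2sum hB2sum
  have hcb : ∀ u, ‖c u‖ ≤ A u * B u := by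
    intro u
    have hre : c u = ∑ s : F, (∑ t : F, ξ ((t : G) * u) * U t s) * conj (η ((s : G) * u)) := by
      rw [hc]
      refine Finset.sum_congr rfl fun s _ => ?_
      rw [Finset.sum_mul]
      exact Finset.sum_congr rfl fun t _ => by ring
    calc ‖c u‖ ≤ ∑ s : F, ‖∑ t : F, ξ ((t : G) * u) * U t s‖ * ‖η ((s : G) * u)‖ := by
          rw [hre]
          refine (norm_sum_le _ _).trans (le_of_eq ?_)
          refine Finset.sum_congr rfl fun s _ => ?_
          rw [norm_mul, RCLike.norm_conj]
      _ ≤ Real.sqrt (∑ s : F, ‖∑ t : F, ξ ((t : G) * u) * U t s‖ ^ 2) *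
            Real.sqrt (∑ s : F, ‖η ((s : G) * u)‖ ^ 2) :=
          Real.sum_mul_le_sqrt_mul_sqrt _ _ _
      _ = A u * B u := by
          rw [unitary_vecMul_normSq' U hU (fun t => ξ ((t : G) * u))]
  have hcnorm : Summable fun u => ‖c u‖ :=
    Summable.of_nonneg_of_le (fun _ => norm_nonneg _) hcb hAB
  have htsA : ∑' u, A u ^ 2 = F.card * ∑' r, ‖ξ r‖ ^ 2 := by
    simp only [hA2]
    rw [Summable.tsum_finsetSum (f := fun (t : F) (u : G) => ‖ξ ((t : G) * u)‖ ^ 2) fun t _ => hξt (t : G)]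
    have : ∀ t : F, ∑' u, ‖ξ ((t : G) * u)‖ ^ 2 = ∑' r, ‖ξ r‖ ^ 2 := fun t =>
      (Equiv.mulLeft (t : G)).tsum_eq (fun r => ‖ξ r‖ ^ 2)
    simp only [this, Finset.sum_const, Finset.card_univ, Fintype.card_coe, nsmul_eq_mul]
  have htsB : ∑' u, B u ^ 2 = F.card * ∑' r, ‖η r‖ ^ 2 := by
    simp only [hB2]
    rw [Summable.tsum_finsetSum (f := fun (s : F) (u : G) => ‖η ((s : G) * u)‖ ^ 2) fun s _ => hηt (s : G)]
    have : ∀ s : F, ∑' u, ‖η ((s : G) * u)‖ ^ 2 = ∑' r, ‖η r‖ ^ 2 := fun s =>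
      (Equiv.mulLeft (s : G)).tsum_eq (fun r => ‖η r‖ ^ 2)
    simp only [this, Finset.sum_const, Finset.card_univ, Fintype.card_coe, nsmul_eq_mul]
  have hSξ : (0:ℝ) ≤ ∑' r, ‖ξ r‖ ^ 2 := tsum_nonneg fun _ => sq_nonneg _
  have hSη : (0:ℝ) ≤ ∑' r, ‖η r‖ ^ 2 := tsum_nonneg fun _ => sq_nonneg _
  calc ‖((Matrix.of fun s t : F => xhat ((s : G) * (t : G)⁻¹)) * (U : Matrix F F ℂ)).trace‖
      = ‖∑' u, c u‖ := by rw [htrace]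
    _ ≤ ∑' u, ‖c u‖ := norm_tsum_le_tsum_norm hcnorm
    _ ≤ ∑' u, A u * B u := Summable.tsum_le_tsum hcb hcnorm hAB
    _ ≤ Real.sqrt (∑' u, A u ^ 2) * Real.sqrt (∑' u, B u ^ 2) :=
        tsum_mul_le_sqrt_mul_sqrt' A B hAnn hBnn hA2sum hB2sum
    _ = F.card * (Real.sqrt (∑' t, ‖ξ t‖ ^ 2) * Real.sqrt (∑' t, ‖η t‖ ^ 2)) := by
        rw [htsA, htsB, Real.sqrt_mul (Nat.cast_nonneg (α := ℝ) F.card), Real.sqrt_mul (Nat.cast_nonneg (α := ℝ) F.card)]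
        rw [show ∀ a b c : ℝ, a * b * (a * c) = (a * a) * (b * c) from fun a b c => by ring]
        rw [Real.mul_self_sqrt (Nat.cast_nonneg (α := ℝ) F.card)]
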